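/- arXiv:2208.02702 — 2 statements merged into one kernel-verified Lean document; each statement's English description precedes it below -/
import Mathlib

section
/- Let n ≥ 2 be an integer and let ω ∈ ℝ with ω ≠ −1. For x ∈ ℝⁿ∖{0} and i,j ∈ {1,…,n}, let Γ_{n,ω,i}^j(x) ≡ ((ω+2)/(2(ω+1)))·δ_{ij}·S_n(x) − (ω/(2(ω+1)))·(1/s_n)·x_i x_j/|x|ⁿ. Then for every x ∈ ℝⁿ∖{0} and every j, the divergence of the j-th column satisfies Σ_{i=1}^n ∂Γ_{n,ω,i}^j/∂x_i (x) = (1/(ω+1))·(1/s_n)·x_j/|x|ⁿ, i.e., div Γ_{n,ω}^j = (1/(ω+1))·∂S_n/∂x_j on ℝⁿ∖{0}. -/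
open MeasureTheory

/-- Partial derivative `∂f/∂x_i` of a scalar field on `ℝⁿ` (Euclidean). -/
noncomputable def pd {n : ℕ} (f : EuclideanSpace ℝ (Fin n) → ℝ) (i : Fin n)
    (x : EuclideanSpace ℝ (Fin n)) : ℝ :=
  fderiv ℝ f x (EuclideanSpace.single i 1)

/-- `s_n`, the `(n-1)`-dimensional measure of the unit sphere in `ℝⁿ`,
which equals `n` times the volume of the unit ball. -/
noncomputable def sphereMeas (n : ℕ) : ℝ :=
  (n : ℝ) * (volume (Metric.ball (0 : EuclideanSpace ℝ (Fin n)) 1)).toReal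

/-- `S_n`, the fundamental solution of the Laplacian in `ℝⁿ`. -/
noncomputable def fundSol (n : ℕ) (x : EuclideanSpace ℝ (Fin n)) : ℝ :=
  if n = 2 then (1 / sphereMeas n) * Real.log ‖x‖
  else (1 / ((2 - (n : ℝ)) * sphereMeas n)) * ‖x‖ ^ ((2 : ℝ) - n)

/-- The `(i,j)` entry `Γ_{n,ω,i}^j` of the Kelvin-type fundamental solution of the
Lamé operator. -/
noncomputable def kelvin (n : ℕ) (ω : ℝ) (i j : Fin n)
    (x : EuclideanSpace ℝ (Fin n)) : ℝ :=
  ((ω + 2) / (2 * (ω + 1))) * (if i = j then 1 else 0) * fundSol n x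
    - (ω / (2 * (ω + 1))) * (1 / sphereMeas n) * (x i * x j / ‖x‖ ^ n)


/-!
Both kinds of entries of `Γ` have explicit partial derivatives away from the origin:
`∂_i S_n = x_i / (s_n |x|ⁿ)`, and the field `x ↦ x_j |x|ᵖ x` has divergence
`(n + 1 + p) x_j |x|ᵖ`, which for `p = -n` is again `x_j / |x|ⁿ`. Hence the divergence of the
`j`-th column is `x_j / (s_n |x|ⁿ)` times the difference `(ω+2)/(2(ω+1)) - ω/(2(ω+1)) = 1/(ω+1)`
of the two coefficients.
-/

section InnerProductSpace

variable {E : Type*} [NormedAddCommGroup E] [InnerProductSpace ℝ E] {x : E}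

theorem hasFDerivAt_norm_rpow_of_ne_zero (hx : x ≠ 0) (p : ℝ) :
    HasFDerivAt (fun y : E => ‖y‖ ^ p) ((p * ‖x‖ ^ (p - 2)) • innerSL ℝ x) x := by
  have hsq : ‖x‖ ^ 2 ≠ 0 := pow_ne_zero 2 (norm_ne_zero_iff.mpr hx)
  have hpow (y : E) (q : ℝ) : (‖y‖ ^ 2) ^ (q / 2) = ‖y‖ ^ q := by
    rw [← Real.rpow_natCast, ← Real.rpow_mul (norm_nonneg y), Nat.cast_ofNat,
      mul_div_cancel₀ q two_ne_zero]
  have h := (hasStrictFDerivAt_norm_sq x).hasFDerivAt.rpow_const (p := p / 2) (Or.inl hsq)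
  simp only [hpow] at h
  refine h.congr_fderiv ?_
  ext v
  rw [show p / 2 - 1 = (p - 2) / 2 by ring, hpow]
  simp only [_root_.smul_apply, innerSL_apply_apply, smul_eq_mul, nsmul_eq_mul]
  ring

theorem hasFDerivAt_log_norm (hx : x ≠ 0) :
    HasFDerivAt (fun y : E => Real.log ‖y‖) (‖x‖ ^ (-2 : ℝ) • innerSL ℝ x) x := by
  have hsq : ‖x‖ ^ 2 ≠ 0 := pow_ne_zero 2 (norm_ne_zero_iff.mpr hx)
  have h := ((hasStrictFDerivAt_norm_sq x).hasFDerivAt.log hsq).const_mul (1 / 2 : ℝ)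
  simp only [Real.log_pow, Nat.cast_ofNat, one_div,
    inv_mul_cancel_left₀ (two_ne_zero (α := ℝ))] at h
  refine h.congr_fderiv ?_
  ext v
  simp only [_root_.smul_apply, innerSL_apply_apply, smul_eq_mul, nsmul_eq_mul,
    Real.rpow_neg (norm_nonneg x), Real.rpow_ofNat, Nat.cast_ofNat]
  ring

end InnerProductSpace

section EuclideanSpace

variable {n : ℕ} {x : EuclideanSpace ℝ (Fin n)}

theorem HasFDerivAt.pd_eq {f : EuclideanSpace ℝ (Fin n) → ℝ}
    {f' : EuclideanSpace ℝ (Fin n) →L[ℝ] ℝ} (h : HasFDerivAt f f' x) (i : Fin n) :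
    pd f i x = f' (EuclideanSpace.single i 1) := by
  rw [pd, h.fderiv]

theorem innerSL_single_one (i : Fin n) :
    innerSL ℝ x (EuclideanSpace.single i 1) = x i := by
  simp [EuclideanSpace.inner_single_right]

theorem pd_const_mul_sub_const_mul {f g : EuclideanSpace ℝ (Fin n) → ℝ}
    (hf : DifferentiableAt ℝ f x) (hg : DifferentiableAt ℝ g x) (a b : ℝ) (i : Fin n) :
    pd (fun y => a * f y - b * g y) i x = a * pd f i x - b * pd g i x := by
  have h : HasFDerivAt (fun y => a * f y - b * g y) (a • fderiv ℝ f x - b • fderiv ℝ g x) x :=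
    (hf.hasFDerivAt.const_mul a).sub (hg.hasFDerivAt.const_mul b)
  rw [h.pd_eq]
  rfl

theorem hasFDerivAt_fundSol (hx : x ≠ 0) :
    HasFDerivAt (fundSol n) (((sphereMeas n)⁻¹ * ‖x‖ ^ (-(n : ℝ))) • innerSL ℝ x) x := by
  by_cases h2 : n = 2
  · subst h2
    have hS : fundSol 2 = fun y => 1 / sphereMeas 2 * Real.log ‖y‖ := by
      funext y; simp [fundSol]
    rw [hS]
    refine ((hasFDerivAt_log_norm hx).const_mul _).congr_fderiv ?_
    rw [smul_smul, one_div, Nat.cast_ofNat]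
  · have h2n : (2 : ℝ) - n ≠ 0 := sub_ne_zero.mpr (by exact_mod_cast Ne.symm h2)
    have hS : fundSol n = fun y => 1 / ((2 - (n : ℝ)) * sphereMeas n) * ‖y‖ ^ ((2 : ℝ) - n) := by
      funext y; simp [fundSol, h2]
    rw [hS]
    refine ((hasFDerivAt_norm_rpow_of_ne_zero hx _).const_mul _).congr_fderiv ?_
    rw [smul_smul, sub_sub_cancel_left]
    congr 1
    field_simp

theorem pd_fundSol (hx : x ≠ 0) (i : Fin n) :
    pd (fundSol n) i x = (sphereMeas n)⁻¹ * (x i * ‖x‖ ^ (-(n : ℝ))) := by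
  rw [(hasFDerivAt_fundSol hx).pd_eq, smul_apply, innerSL_single_one, smul_eq_mul]
  ring

theorem hasFDerivAt_coord_mul_coord_mul_norm_rpow (hx : x ≠ 0) (p : ℝ) (i j : Fin n) :
    HasFDerivAt (fun y : EuclideanSpace ℝ (Fin n) => y i * y j * ‖y‖ ^ p)
      ((x i * x j) • (p * ‖x‖ ^ (p - 2)) • innerSL ℝ x
        + ‖x‖ ^ p • (x i • EuclideanSpace.proj j + x j • EuclideanSpace.proj i)) x := by
  have hproj (k : Fin n) := (EuclideanSpace.proj (𝕜 := ℝ) k).hasFDerivAt (x := x)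
  exact ((hproj i).mul (hproj j)).mul (hasFDerivAt_norm_rpow_of_ne_zero hx p)

theorem pd_coord_mul_coord_mul_norm_rpow (hx : x ≠ 0) (p : ℝ) (i j : Fin n) :
    pd (fun y => y i * y j * ‖y‖ ^ p) i x
      = p * x i ^ 2 * x j * ‖x‖ ^ (p - 2) + (x j + if i = j then x i else 0) * ‖x‖ ^ p := by
  rw [(hasFDerivAt_coord_mul_coord_mul_norm_rpow hx p i j).pd_eq]
  rcases eq_or_ne i j with rfl | hij
  · simp only [smul_add, add_apply, smul_apply, innerSL_single_one, smul_eq_mul,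
      PiLp.proj_apply, PiLp.single_eq_same, mul_one, if_true]
    ring
  · simp only [smul_add, add_apply, smul_apply, innerSL_single_one, smul_eq_mul,
      PiLp.proj_apply, ne_eq, hij, hij.symm, not_false_eq_true, PiLp.single_eq_of_ne,
      PiLp.single_eq_same, mul_zero, mul_one, zero_add, add_zero, if_false]
    ring

theorem sum_pd_coord_mul_coord_mul_norm_rpow (hx : x ≠ 0) (p : ℝ) (j : Fin n) :
    ∑ i, pd (fun y => y i * y j * ‖y‖ ^ p) i x = (n + 1 + p) * x j * ‖x‖ ^ p := by
  have hnorm : ‖x‖ ^ 2 * ‖x‖ ^ (p - 2) = ‖x‖ ^ p := by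
    rw [← Real.rpow_natCast, ← Real.rpow_add (norm_pos_iff.mpr hx)]
    norm_num
  calc ∑ i, pd (fun y => y i * y j * ‖y‖ ^ p) i x
      = p * (∑ i, x i ^ 2) * x j * ‖x‖ ^ (p - 2)
          + (∑ i, (x j + if i = j then x i else 0)) * ‖x‖ ^ p := by
        rw [Finset.sum_congr rfl fun i _ => pd_coord_mul_coord_mul_norm_rpow hx p i j,
          Finset.sum_add_distrib, ← Finset.sum_mul, ← Finset.sum_mul, ← Finset.sum_mul,
          ← Finset.mul_sum]
    _ = (n + 1 + p) * x j * ‖x‖ ^ p := by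
        rw [← EuclideanSpace.real_norm_sq_eq, Finset.sum_add_distrib, Finset.sum_ite_eq',
          if_pos (Finset.mem_univ j), Finset.sum_const, Finset.card_univ, Fintype.card_fin,
          nsmul_eq_mul, ← hnorm]
        ring

end EuclideanSpace

theorem div_norm_pow_eq_mul_norm_rpow_neg {E : Type*} [SeminormedAddCommGroup E]
    (a : ℝ) (x : E) (n : ℕ) : a / ‖x‖ ^ n = a * ‖x‖ ^ (-(n : ℝ)) := by
  rw [Real.rpow_neg (norm_nonneg x), Real.rpow_natCast, div_eq_mul_inv]

theorem kelvin_coeff_sub (ω : ℝ) :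
    (ω + 2) / (2 * (ω + 1)) - ω / (2 * (ω + 1)) = 1 / (ω + 1) := by
  rw [← sub_div, add_sub_cancel_left, div_mul_eq_div_div, div_self two_ne_zero]

theorem pd_kelvin {n : ℕ} {x : EuclideanSpace ℝ (Fin n)} (hx : x ≠ 0) (ω : ℝ) (i j : Fin n) :
    pd (fun y => kelvin n ω i j y) i x
      = (ω + 2) / (2 * (ω + 1)) * (if i = j then 1 else 0) * pd (fundSol n) i x
        - ω / (2 * (ω + 1)) * (1 / sphereMeas n)
          * pd (fun y => y i * y j * ‖y‖ ^ (-(n : ℝ))) i x := by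
  simp only [kelvin, div_norm_pow_eq_mul_norm_rpow_neg]
  exact pd_const_mul_sub_const_mul (hasFDerivAt_fundSol hx).differentiableAt
    (hasFDerivAt_coord_mul_coord_mul_norm_rpow hx _ i j).differentiableAt _ _ i

theorem div_kelvin_column_general (n : ℕ) (ω : ℝ)
    (x : EuclideanSpace ℝ (Fin n)) (hx : x ≠ 0) (j : Fin n) :
    ∑ i : Fin n, pd (fun y => kelvin n ω i j y) i x
      = (1 / (ω + 1)) * (1 / sphereMeas n) * (x j / ‖x‖ ^ n) := by
  calc ∑ i : Fin n, pd (fun y => kelvin n ω i j y) i x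
      = (ω + 2) / (2 * (ω + 1)) * pd (fundSol n) j x
        - ω / (2 * (ω + 1)) * (1 / sphereMeas n)
          * ∑ i, pd (fun y => y i * y j * ‖y‖ ^ (-(n : ℝ))) i x := by
        simp only [pd_kelvin hx, Finset.sum_sub_distrib, ← Finset.mul_sum, mul_ite, mul_one,
          mul_zero, ite_mul, zero_mul, Finset.sum_ite_eq', Finset.mem_univ, if_true]
    _ = ((ω + 2) / (2 * (ω + 1)) - ω / (2 * (ω + 1))) * (1 / sphereMeas n)
          * (x j * ‖x‖ ^ (-(n : ℝ))) := by
        rw [pd_fundSol hx, sum_pd_coord_mul_coord_mul_norm_rpow hx]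
        ring
    _ = _ := by rw [kelvin_coeff_sub, div_norm_pow_eq_mul_norm_rpow_neg]

theorem div_kelvin_column (n : ℕ) (hn : 2 ≤ n) (ω : ℝ) (hω : ω ≠ -1)
    (x : EuclideanSpace ℝ (Fin n)) (hx : x ≠ 0) (j : Fin n) :
    ∑ i : Fin n, pd (fun y => kelvin n ω i j y) i x
      = (1 / (ω + 1)) * (1 / sphereMeas n) * (x j / ‖x‖ ^ n) :=
  div_kelvin_column_general n ω x hx j
end

section
/- Let n ≥ 2 be an integer and let ω ∈ ℝ with ω ≠ −1. For x ∈ ℝⁿ∖{0} and i,j ∈ {1,…,n}, let Γ_{n,ω,i}^j(x) ≡ ((ω+2)/(2(ω+1)))·δ_{ij}·S_n(x) − (ω/(2(ω+1)))·(1/s_n)·x_i x_j/|x|ⁿ, and let Γ_{n,ω}^j ≡ (Γ_{n,ω,i}^j)_{i=1,…,n} denote the j-th column, a map from ℝⁿ∖{0} to ℝⁿ. Then for every j ∈ {1,…,n} one has L[ω]Γ_{n,ω}^j(x) ≡ ΔΓ_{n,ω}^j(x) + ω∇(div Γ_{n,ω}^j)(x) = 0 for all x ∈ ℝⁿ∖{0};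 that is, each column of the Kelvin-type matrix Γ_{n,ω} solves the homogeneous Lamé equations away from the origin. -/
open MeasureTheory

/-!
Write `K_j(x) = x_j |x|^{-n}`, so that `∂_l S_n = K_l / s_n`, and `H_{jl} = ∂_l K_j`. The Kelvin
column is `Γ_i^j = a δ_ij S_n - b x_i K_j` with `a = (ω+2)/(2(ω+1))` and `b = ω/(2(ω+1)s_n)`.
Since `S_n` and `K_j` are harmonic away from the origin, `ΔΓ_i^j = -2b H_{ji}`; since `K_j` is
homogeneous of degree `1 - n`, Euler's identity gives `div Γ^j = (a/s_n - b) K_j`. Hence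
`L[ω]Γ^j_i = (ω(a/s_n - b) - 2b) H_{ji}`, and for these `a, b` the coefficient vanishes.
-/

open Filter Topology

namespace Lame

variable {n : ℕ} {x : EuclideanSpace ℝ (Fin n)}

section PartialDerivative

variable {f g : EuclideanSpace ℝ (Fin n) → ℝ}

lemma pd_add (hf : DifferentiableAt ℝ f x) (hg : DifferentiableAt ℝ g x) (l : Fin n) :
    pd (fun y => f y + g y) l x = pd f l x + pd g l x := by
  simp only [pd, fderiv_fun_add hf hg, add_apply]

lemma pd_sub (hf : DifferentiableAt ℝ f x) (hg : DifferentiableAt ℝ g x) (l : Fin n) :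
    pd (fun y => f y - g y) l x = pd f l x - pd g l x := by
  simp only [pd, fderiv_fun_sub hf hg, sub_apply]

lemma pd_mul (hf : DifferentiableAt ℝ f x) (hg : DifferentiableAt ℝ g x) (l : Fin n) :
    pd (fun y => f y * g y) l x = pd f l x * g x + f x * pd g l x := by
  simp only [pd, fderiv_fun_mul hf hg, add_apply, smul_apply, smul_eq_mul]
  ring

lemma pd_const_mul (hf : DifferentiableAt ℝ f x) (c : ℝ) (l : Fin n) :
    pd (fun y => c * f y) l x = c * pd f l x := by
  simp only [pd, fderiv_const_mul hf, smul_apply, smul_eq_mul]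

lemma pd_congr (h : f =ᶠ[𝓝 x] g) (l : Fin n) : pd f l x = pd g l x := by
  rw [pd, h.fderiv_eq, pd]

lemma pd_coord (a l : Fin n) : pd (fun y => y a) l x = if a = l then 1 else 0 := by
  change fderiv ℝ (EuclideanSpace.proj a : EuclideanSpace ℝ (Fin n) →L[ℝ] ℝ) x _ = _
  rw [ContinuousLinearMap.fderiv]
  simp

@[fun_prop]
lemma differentiableAt_coord (a : Fin n) :
    DifferentiableAt ℝ (fun y : EuclideanSpace ℝ (Fin n) => y a) x :=
  (EuclideanSpace.proj a : EuclideanSpace ℝ (Fin n) →L[ℝ] ℝ).differentiableAt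

end PartialDerivative

section RadialPower

lemma norm_rpow_eq_norm_sq_rpow {E : Type*} [SeminormedAddCommGroup E] (y : E) (p : ℝ) :
    ‖y‖ ^ p = (‖y‖ ^ 2) ^ (p / 2) := by
  rw [← Real.rpow_natCast, ← Real.rpow_mul (norm_nonneg y)]
  norm_num [mul_div_cancel₀]

lemma norm_sq_mul_norm_rpow_sub_two {E : Type*} [NormedAddCommGroup E] {z : E} (hz : z ≠ 0)
    (p : ℝ) : ‖z‖ ^ 2 * ‖z‖ ^ (p - 2) = ‖z‖ ^ p := by
  rw [← Real.rpow_natCast, ← Real.rpow_add (norm_pos_iff.2 hz)]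
  norm_num

variable {F : Type*} [NormedAddCommGroup F] [InnerProductSpace ℝ F] {z : F}

lemma hasFDerivAt_norm_rpow_of_ne_zero (hz : z ≠ 0) (p : ℝ) :
    HasFDerivAt (fun y => ‖y‖ ^ p) ((p * ‖z‖ ^ (p - 2)) • innerSL ℝ z) z := by
  rw [funext (norm_rpow_eq_norm_sq_rpow · p)]
  refine ((hasFDerivAt_id z).norm_sq.rpow_const (Or.inl (by positivity))).congr_fderiv ?_
  rw [norm_rpow_eq_norm_sq_rpow z, sub_div, div_self two_ne_zero]
  ext v
  simp only [id_eq, ContinuousLinearMap.comp_id, smul_apply, coe_innerSL_apply, nsmul_eq_mul,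
    Nat.cast_ofNat, smul_eq_mul]
  ring

@[fun_prop]
lemma differentiableAt_norm_rpow (hz : z ≠ 0) (p : ℝ) :
    DifferentiableAt ℝ (fun y => ‖y‖ ^ p) z :=
  (hasFDerivAt_norm_rpow_of_ne_zero hz p).differentiableAt

lemma hasFDerivAt_log_norm (hz : z ≠ 0) :
    HasFDerivAt (fun y => Real.log ‖y‖) ((‖z‖ ^ 2)⁻¹ • innerSL ℝ z) z := by
  have h : (fun y : F => Real.log ‖y‖) = fun y => 2⁻¹ * Real.log (‖y‖ ^ 2) := by
    funext y; rw [Real.log_pow]; push_cast; ring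
  rw [h]
  refine (((hasFDerivAt_id z).norm_sq.log (by positivity)).const_mul _).congr_fderiv ?_
  ext v
  simp only [id_eq, ContinuousLinearMap.comp_id, smul_apply, coe_innerSL_apply, nsmul_eq_mul,
    Nat.cast_ofNat, smul_eq_mul]
  ring

@[fun_prop]
lemma differentiableAt_log_norm (hz : z ≠ 0) :
    DifferentiableAt ℝ (fun y => Real.log ‖y‖) z :=
  (hasFDerivAt_log_norm hz).differentiableAt

lemma pd_norm_rpow (hx : x ≠ 0) (p : ℝ) (l : Fin n) :
    pd (fun y => ‖y‖ ^ p) l x = p * (x l * ‖x‖ ^ (p - 2)) := by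
  rw [pd, (hasFDerivAt_norm_rpow_of_ne_zero hx p).fderiv]
  simp only [smul_apply, coe_innerSL_apply, EuclideanSpace.inner_single_right, Real.ringHom_apply,
    one_mul, smul_eq_mul]
  ring

lemma pd_log_norm (hx : x ≠ 0) (l : Fin n) :
    pd (fun y => Real.log ‖y‖) l x = x l * ‖x‖ ^ (-2 : ℝ) := by
  rw [pd, (hasFDerivAt_log_norm hx).fderiv]
  simp only [smul_apply, coe_innerSL_apply, EuclideanSpace.inner_single_right, Real.ringHom_apply,
    one_mul, smul_eq_mul, Real.rpow_neg (norm_nonneg x), Real.rpow_ofNat]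
  ring

lemma sum_coord_mul_coord_mul (x : EuclideanSpace ℝ (Fin n)) (c : ℝ) :
    ∑ l, x l * (x l * c) = ‖x‖ ^ 2 * c := by
  rw [EuclideanSpace.real_norm_sq_eq, Finset.sum_mul]
  exact Finset.sum_congr rfl fun l _ => by ring

end RadialPower

section RadialField

noncomputable def radialField (n : ℕ) (j : Fin n) (y : EuclideanSpace ℝ (Fin n)) : ℝ :=
  y j * ‖y‖ ^ (-(n : ℝ))

noncomputable def radialJac (n : ℕ) (j l : Fin n) (y : EuclideanSpace ℝ (Fin n)) : ℝ :=
  (if j = l then 1 else 0) * ‖y‖ ^ (-(n : ℝ)) - n * (y j * (y l * ‖y‖ ^ (-(n : ℝ) - 2)))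

@[fun_prop]
lemma differentiableAt_radialField (hx : x ≠ 0) (j : Fin n) :
    DifferentiableAt ℝ (radialField n j) x := by
  unfold radialField; fun_prop (disch := assumption)

@[fun_prop]
lemma differentiableAt_radialJac (hx : x ≠ 0) (j l : Fin n) :
    DifferentiableAt ℝ (radialJac n j l) x := by
  unfold radialJac; fun_prop (disch := assumption)

lemma pd_radialField (hx : x ≠ 0) (j l : Fin n) :
    pd (radialField n j) l x = radialJac n j l x := by
  unfold radialField
  rw [pd_mul, pd_coord, pd_norm_rpow hx, radialJac]
  · ring_nf
  all_goals fun_prop (disch := assumption)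

lemma pd_radialJac (hx : x ≠ 0) (j l : Fin n) :
    pd (radialJac n j l) l x =
      (if j = l then 1 else 0) * (-2 * n * (x l * ‖x‖ ^ (-(n : ℝ) - 2)))
      - n * (x j * ‖x‖ ^ (-(n : ℝ) - 2))
      + n * (n + 2) * (x j * (x l * (x l * ‖x‖ ^ (-(n : ℝ) - 2 - 2)))) := by
  unfold radialJac
  rw [pd_sub, pd_const_mul, pd_const_mul, pd_mul, pd_mul, pd_coord, pd_coord, pd_norm_rpow hx,
    pd_norm_rpow hx, if_pos rfl]
  · ring
  all_goals fun_prop (disch := assumption)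

lemma sum_radialJac_self (hx : x ≠ 0) : ∑ l, radialJac n l l x = 0 := by
  simp only [radialJac, if_true, one_mul, Finset.sum_sub_distrib, Finset.sum_const,
    Finset.card_univ, Fintype.card_fin, nsmul_eq_mul, ← Finset.mul_sum, sum_coord_mul_coord_mul,
    norm_sq_mul_norm_rpow_sub_two hx, sub_self]

lemma sum_coord_mul_radialJac (hx : x ≠ 0) (j : Fin n) :
    ∑ l, x l * radialJac n j l x = (1 - n) * radialField n j x := by
  have h (l : Fin n) : x l * radialJac n j l x = (if j = l then x l * ‖x‖ ^ (-(n : ℝ)) else 0)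
      - n * x j * (x l * (x l * ‖x‖ ^ (-(n : ℝ) - 2))) := by
    unfold radialJac; split_ifs <;> ring
  simp only [h, Finset.sum_sub_distrib, Finset.sum_ite_eq, Finset.mem_univ, if_true,
    ← Finset.mul_sum, sum_coord_mul_coord_mul, norm_sq_mul_norm_rpow_sub_two hx, radialField]
  ring

lemma sum_pd_radialJac (hx : x ≠ 0) (j : Fin n) : ∑ l, pd (radialJac n j l) l x = 0 := by
  simp only [pd_radialJac hx, Finset.sum_add_distrib, Finset.sum_sub_distrib, ite_mul, one_mul,
    zero_mul, Finset.sum_ite_eq, Finset.mem_univ, if_true, Finset.sum_const, Finset.card_univ,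
    Fintype.card_fin, nsmul_eq_mul, ← Finset.mul_sum, sum_coord_mul_coord_mul,
    norm_sq_mul_norm_rpow_sub_two hx]
  ring

end RadialField

section Kelvin

@[fun_prop]
lemma differentiableAt_fundSol (hx : x ≠ 0) : DifferentiableAt ℝ (fundSol n) x := by
  unfold fundSol; split_ifs <;> fun_prop (disch := assumption)

lemma pd_fundSol (hx : x ≠ 0) (l : Fin n) :
    pd (fundSol n) l x = (sphereMeas n)⁻¹ * radialField n l x := by
  unfold fundSol radialField
  split_ifs with h
  · subst h
    rw [pd_const_mul, pd_log_norm hx]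
    · norm_num
    · fun_prop (disch := assumption)
  · have h2n : (2 : ℝ) - n ≠ 0 := sub_ne_zero.2 fun h' => h (by exact_mod_cast h'.symm)
    rw [pd_const_mul, pd_norm_rpow hx, show (2 : ℝ) - n - 2 = -n by ring]
    · field_simp
    · fun_prop (disch := assumption)

noncomputable def kelvinFamily (n : ℕ) (a b : ℝ) (i j : Fin n)
    (y : EuclideanSpace ℝ (Fin n)) : ℝ :=
  a * (if i = j then 1 else 0) * fundSol n y - b * (y i * radialField n j y)

lemma kelvin_eq_kelvinFamily (ω : ℝ) (i j : Fin n) :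
    kelvin n ω i j =
      kelvinFamily n ((ω + 2) / (2 * (ω + 1))) (ω / (2 * (ω + 1)) / sphereMeas n) i j := by
  funext y
  rw [kelvin, kelvinFamily, radialField, Real.rpow_neg (norm_nonneg y), Real.rpow_natCast]
  ring

variable {a b : ℝ}

lemma pd_kelvinFamily (hx : x ≠ 0) (i j l : Fin n) :
    pd (kelvinFamily n a b i j) l x =
      a * (if i = j then 1 else 0) * ((sphereMeas n)⁻¹ * radialField n l x)
      - b * ((if i = l then 1 else 0) * radialField n j x + x i * radialJac n j l x) := by
  unfold kelvinFamily
  rw [pd_sub, pd_const_mul, pd_const_mul, pd_mul, pd_fundSol hx, pd_coord, pd_radialField hx]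
  all_goals fun_prop (disch := assumption)

lemma pd_pd_kelvinFamily (hx : x ≠ 0) (i j l : Fin n) :
    pd (pd (kelvinFamily n a b i j) l) l x =
      a * (if i = j then 1 else 0) * ((sphereMeas n)⁻¹ * radialJac n l l x)
        - b * (2 * ((if i = l then 1 else 0) * radialJac n j l x)
          + x i * pd (radialJac n j l) l x) := by
  have h : pd (kelvinFamily n a b i j) l =ᶠ[𝓝 x] fun y =>
      a * (if i = j then 1 else 0) * ((sphereMeas n)⁻¹ * radialField n l y)
        - b * ((if i = l then 1 else 0) * radialField n j y + y i * radialJac n j l y) :=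
    (eventually_ne_nhds hx).mono fun y hy => pd_kelvinFamily hy i j l
  rw [pd_congr h, pd_sub, pd_const_mul, pd_const_mul, pd_const_mul, pd_add, pd_const_mul, pd_mul,
    pd_radialField hx, pd_radialField hx, pd_coord]
  · ring
  all_goals fun_prop (disch := assumption)

lemma sum_pd_pd_kelvinFamily (hx : x ≠ 0) (i j : Fin n) :
    ∑ l, pd (pd (kelvinFamily n a b i j) l) l x = -2 * b * radialJac n j i x := by
  simp only [pd_pd_kelvinFamily hx, Finset.sum_sub_distrib, ← Finset.mul_sum,
    Finset.sum_add_distrib, ite_mul, one_mul, zero_mul, Finset.sum_ite_eq, Finset.mem_univ,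
    if_true, sum_radialJac_self hx, sum_pd_radialJac hx]
  ring

lemma sum_pd_kelvinFamily (hx : x ≠ 0) (j : Fin n) :
    ∑ l, pd (kelvinFamily n a b l j) l x = (a * (sphereMeas n)⁻¹ - b) * radialField n j x := by
  simp only [pd_kelvinFamily hx, Finset.sum_sub_distrib, ← Finset.mul_sum,
    Finset.sum_add_distrib, ite_mul, mul_ite, one_mul, zero_mul, mul_one, mul_zero,
    Finset.sum_ite_eq', Finset.mem_univ, if_true, sum_coord_mul_radialJac hx, Finset.sum_const,
    Finset.card_univ, Fintype.card_fin, nsmul_eq_mul]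
  ring

lemma pd_sum_pd_kelvinFamily (hx : x ≠ 0) (i j : Fin n) :
    pd (fun y => ∑ l, pd (kelvinFamily n a b l j) l y) i x
      = (a * (sphereMeas n)⁻¹ - b) * radialJac n j i x := by
  have h : (fun y => ∑ l, pd (kelvinFamily n a b l j) l y) =ᶠ[𝓝 x]
      fun y => (a * (sphereMeas n)⁻¹ - b) * radialField n j y :=
    (eventually_ne_nhds hx).mono fun y hy => sum_pd_kelvinFamily hy j
  rw [pd_congr h, pd_const_mul, pd_radialField hx]
  fun_prop (disch := assumption)

lemma lame_kelvinFamily_eq (hx : x ≠ 0) (ω : ℝ) (i j : Fin n) :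
    ∑ l, pd (pd (kelvinFamily n a b i j) l) l x
        + ω * pd (fun y => ∑ l, pd (kelvinFamily n a b l j) l y) i x
      = (ω * (a * (sphereMeas n)⁻¹ - b) - 2 * b) * radialJac n j i x := by
  rw [sum_pd_pd_kelvinFamily hx, pd_sum_pd_kelvinFamily hx]
  ring

end Kelvin

end Lame

theorem Lame_kelvin_column_eq_zero_general (n : ℕ) (ω : ℝ) (hω : ω ≠ -1)
    (x : EuclideanSpace ℝ (Fin n)) (hx : x ≠ 0) (j i : Fin n) :
    (∑ l : Fin n, pd (pd (fun y => kelvin n ω i j y) l) l x)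
        + ω * pd (fun y => ∑ l : Fin n, pd (fun w => kelvin n ω l j w) l y) i x
      = 0 := by
  have hω' : ω + 1 ≠ 0 := fun h => hω (eq_neg_of_add_eq_zero_left h)
  have hcoeff :
      ω * ((ω + 2) / (2 * (ω + 1)) * (sphereMeas n)⁻¹ - ω / (2 * (ω + 1)) / sphereMeas n)
        - 2 * (ω / (2 * (ω + 1)) / sphereMeas n) = 0 := by
    field_simp
    ring
  simp only [Lame.kelvin_eq_kelvinFamily]
  rw [Lame.lame_kelvinFamily_eq hx, hcoeff, zero_mul]

theorem Lame_kelvin_column_eq_zero (n : ℕ) (hn : 2 ≤ n) (ω : ℝ) (hω : ω ≠ -1)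
    (x : EuclideanSpace ℝ (Fin n)) (hx : x ≠ 0) (j i : Fin n) :
    (∑ l : Fin n, pd (pd (fun y => kelvin n ω i j y) l) l x)
        + ω * pd (fun y => ∑ l : Fin n, pd (fun w => kelvin n ω l j w) l y) i x
      = 0 :=
  Lame_kelvin_column_eq_zero_general n ω hω x hx j i
end
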